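/- Let A : Fin m × Fin (n²) → Fin n be an orthogonal array OA(m,n) with 2 ≤ m ≤ n, and label the entries by {0, 1, …, n−1}. For r ∈ Fin m and i ∈ {1, …, n−1} let f_{r,i} = 1_{S_{r,0}} − 1_{S_{r,i}} ∈ ℚ^(Fin (n²)). Then the m(n−1) vectors f_{r,i} form a basis of the eigenspace {v ∈ ℚ^(Fin (n²)) : M v = (n − m) v} of the adjacency matrix M of the block graph of A corresponding to the eigenvalue n − m; in particular they are linearly independent and this eigenspace has dimension m(n−1). -/

import Mathlib

/-- An orthogonal array `OA(m,n)`. -/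
def IsOrthogonalArray (m n : ℕ) (A : Fin m × Fin (n ^ 2) → Fin n) : Prop :=
  ∀ r s : Fin m, r ≠ s →
    Function.Bijective fun col : Fin (n ^ 2) => (A (r, col), A (s, col))

/-- The block graph of an orthogonal array. -/
def blockGraph {m n : ℕ} (A : Fin m × Fin (n ^ 2) → Fin n) : SimpleGraph (Fin (n ^ 2)) :=
  SimpleGraph.fromRel fun col col' => ∃ r : Fin m, A (r, col) = A (r, col')

instance {m n : ℕ} (A : Fin m × Fin (n ^ 2) → Fin n) :
    DecidableRel (blockGraph A).Adj := fun col col' =>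
  inferInstanceAs (Decidable (col ≠ col' ∧
    ((∃ r : Fin m, A (r, col) = A (r, col')) ∨ (∃ r : Fin m, A (r, col') = A (r, col)))))

/-!
Write `χ r i` for the indicator of the clique `S_{r,i}`. Since two distinct columns agree in at most
one row, `M + m I = ∑_{r,i} χ r i (χ r i)ᵀ`, and orthogonality gives `⟨χ r i, χ s j⟩ = 1` for
`r ≠ s`, `n δ_{ij}` for `r = s`. Hence `M f_{r,i} = (n - m) f_{r,i}`, and pairing with `χ s j`
(`j ≠ 0`) picks out `-n` times the coefficient of `f_{s,j}`, giving independence. Conversely,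
an eigenvector `v` for `n - m` is orthogonal to the all-ones vector (an eigenvector for
`m(n - 1)`), and `n v = ∑ ⟨χ r i, v⟩ χ r i` where for each row the coefficients sum to
`⟨1, v⟩ = 0`, so `v` lies in the span of the differences `χ r 0 - χ r i`.
-/

open Finset Matrix

namespace IsOrthogonalArray

variable {m n : ℕ} {A : Fin m × Fin (n ^ 2) → Fin n}

theorem eq_of_agree (hA : IsOrthogonalArray m n A) {r s : Fin m} (hrs : r ≠ s)
    {c c' : Fin (n ^ 2)} (hr : A (r, c) = A (r, c')) (hs : A (s, c) = A (s, c')) : c = c' :=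
  (hA r s hrs).injective (Prod.ext hr hs)

end IsOrthogonalArray

section CliqueIndicator

variable {m n : ℕ} {A : Fin m × Fin (n ^ 2) → Fin n}

def cliqueIndicator (A : Fin m × Fin (n ^ 2) → Fin n) (r : Fin m) (i : Fin n) :
    Fin (n ^ 2) → ℚ :=
  fun c => if A (r, c) = i then 1 else 0

theorem sum_cliqueIndicator (r : Fin m) : ∑ i, cliqueIndicator A r i = 1 := by
  ext c
  simp [cliqueIndicator]

theorem cliqueIndicator_dotProduct_of_ne (hA : IsOrthogonalArray m n A) {r s : Fin m}
    (hrs : r ≠ s) (i j : Fin n) : cliqueIndicator A r i ⬝ᵥ cliqueIndicator A s j = 1 := by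
  calc cliqueIndicator A r i ⬝ᵥ cliqueIndicator A s j
      = ∑ c, if (A (r, c), A (s, c)) = (i, j) then (1 : ℚ) else 0 := by
        refine sum_congr rfl fun c _ => ?_
        simp only [cliqueIndicator, Prod.mk.injEq, ite_zero_mul_ite_zero, mul_one]
    _ = ∑ x : Fin n × Fin n, if x = (i, j) then (1 : ℚ) else 0 :=
        Fintype.sum_bijective _ (hA r s hrs) _ _ fun _ => rfl
    _ = 1 := by simp

theorem cliqueIndicator_dotProduct_one (hA : IsOrthogonalArray m n A) (hm : 2 ≤ m)
    (r : Fin m) (i : Fin n) : cliqueIndicator A r i ⬝ᵥ 1 = n := by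
  obtain ⟨s, hsr⟩ := Fintype.exists_ne_of_one_lt_card (by rw [Fintype.card_fin]; omega) r
  rw [← sum_cliqueIndicator (A := A) s, dotProduct_sum]
  simp [cliqueIndicator_dotProduct_of_ne hA hsr.symm]

theorem cliqueIndicator_dotProduct (hA : IsOrthogonalArray m n A) (hm : 2 ≤ m)
    (r s : Fin m) (i j : Fin n) :
    cliqueIndicator A r i ⬝ᵥ cliqueIndicator A s j =
      if r = s then (if i = j then (n : ℚ) else 0) else 1 := by
  split_ifs with hrs hij
  · subst hrs hij
    rw [← cliqueIndicator_dotProduct_one hA hm r i]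
    refine sum_congr rfl fun c _ => ?_
    simp [cliqueIndicator]
  · refine sum_eq_zero fun c _ => ?_
    simp only [cliqueIndicator, hrs, ite_zero_mul_ite_zero, mul_one]
    exact if_neg fun h => hij (h.1.symm.trans h.2)
  · exact cliqueIndicator_dotProduct_of_ne hA hrs i j

end CliqueIndicator

section AdjMatrix

variable {m n : ℕ} {A : Fin m × Fin (n ^ 2) → Fin n}

theorem blockGraph_adj_iff {c c' : Fin (n ^ 2)} :
    (blockGraph A).Adj c c' ↔ c ≠ c' ∧ ∃ r, A (r, c) = A (r, c') := by
  simp only [blockGraph, SimpleGraph.fromRel_adj, eq_comm (a := A (_, c')), or_self]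

theorem sum_cliqueIndicator_mul_cliqueIndicator (r : Fin m) (c c' : Fin (n ^ 2)) :
    ∑ i, cliqueIndicator A r i c * cliqueIndicator A r i c' =
      if A (r, c) = A (r, c') then 1 else 0 := by
  simp [cliqueIndicator, eq_comm (a := A (r, c'))]

theorem adjMatrix_blockGraph_add_smul_one (hA : IsOrthogonalArray m n A) :
    (blockGraph A).adjMatrix ℚ + (m : ℚ) • 1 =
      ∑ r, ∑ i, vecMulVec (cliqueIndicator A r i) (cliqueIndicator A r i) := by
  ext c c'
  simp only [Matrix.add_apply, Matrix.smul_apply, one_apply, Matrix.sum_apply, vecMulVec_apply,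
    sum_cliqueIndicator_mul_cliqueIndicator, SimpleGraph.adjMatrix_apply, blockGraph_adj_iff]
  rcases eq_or_ne c c' with rfl | hcc
  · simp
  · simp only [hcc, ne_eq, not_false_eq_true, true_and, if_false, smul_zero, add_zero]
    split_ifs with hagree
    · obtain ⟨r, hr⟩ := hagree
      rw [sum_eq_single r (fun s _ hsr => if_neg fun hs => hcc (hA.eq_of_agree hsr hs hr))
        (by simp), if_pos hr]
    · exact (sum_eq_zero fun r _ => if_neg fun hr => hagree ⟨r, hr⟩).symm

theorem adjMatrix_blockGraph_mulVec (hA : IsOrthogonalArray m n A) (v : Fin (n ^ 2) → ℚ) :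
    (blockGraph A).adjMatrix ℚ *ᵥ v =
      ∑ r, ∑ i, (cliqueIndicator A r i ⬝ᵥ v) • cliqueIndicator A r i - (m : ℚ) • v := by
  have h := congrArg (· *ᵥ v) (adjMatrix_blockGraph_add_smul_one hA)
  simp only [add_mulVec, smul_mulVec, one_mulVec, sum_mulVec, vecMulVec_mulVec,
    op_smul_eq_smul] at h
  exact eq_sub_of_add_eq h

end AdjMatrix

section CliqueDiff

variable {m n : ℕ} [NeZero n] {A : Fin m × Fin (n ^ 2) → Fin n}

def cliqueDiff (A : Fin m × Fin (n ^ 2) → Fin n) (p : Fin m × {i : Fin n // (i : ℕ) ≠ 0}) :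
    Fin (n ^ 2) → ℚ :=
  cliqueIndicator A p.1 0 - cliqueIndicator A p.1 p.2

theorem cliqueIndicator_dotProduct_cliqueDiff (hA : IsOrthogonalArray m n A) (hm : 2 ≤ m)
    (s : Fin m) (j : Fin n) (p : Fin m × {i : Fin n // (i : ℕ) ≠ 0}) :
    cliqueIndicator A s j ⬝ᵥ cliqueDiff A p =
      if s = p.1 then (n : ℚ) * ((if j = 0 then 1 else 0) - if j = p.2 then 1 else 0) else 0 := by
  rw [cliqueDiff, dotProduct_sub, cliqueIndicator_dotProduct hA hm,
    cliqueIndicator_dotProduct hA hm]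
  split_ifs <;> simp_all

theorem cliqueIndicator_dotProduct_cliqueDiff_eq_ite (hA : IsOrthogonalArray m n A)
    (hm : 2 ≤ m) (p q : Fin m × {i : Fin n // (i : ℕ) ≠ 0}) :
    cliqueIndicator A q.1 q.2 ⬝ᵥ cliqueDiff A p = if p = q then -(n : ℚ) else 0 := by
  have hq : q.2.1 ≠ 0 := fun h => q.2.2 (by simp [h])
  rw [cliqueIndicator_dotProduct_cliqueDiff hA hm]
  by_cases hpq : p = q
  · simp [hpq, hq]
  · have hne : q.1 = p.1 → q.2.1 ≠ p.2.1 := fun h1 h2 =>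
      hpq (Prod.ext h1.symm (Subtype.ext h2.symm))
    split_ifs <;> simp_all

theorem adjMatrix_blockGraph_mulVec_cliqueDiff (hA : IsOrthogonalArray m n A) (hm : 2 ≤ m)
    (p : Fin m × {i : Fin n // (i : ℕ) ≠ 0}) :
    (blockGraph A).adjMatrix ℚ *ᵥ cliqueDiff A p = ((n : ℚ) - m) • cliqueDiff A p := by
  rw [adjMatrix_blockGraph_mulVec hA, sub_smul, Fintype.sum_eq_single p.1 fun r hr =>
    sum_eq_zero fun i _ => by
      rw [cliqueIndicator_dotProduct_cliqueDiff hA hm, if_neg hr, zero_smul]]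
  congr 1
  simp only [cliqueIndicator_dotProduct_cliqueDiff hA hm, if_true, mul_sub, mul_ite, mul_one,
    mul_zero, sub_smul, ite_smul, zero_smul, sum_sub_distrib, sum_ite_eq', mem_univ]
  rw [cliqueDiff, smul_sub]

theorem linearIndependent_cliqueDiff (hA : IsOrthogonalArray m n A) (hm : 2 ≤ m) :
    LinearIndependent ℚ (cliqueDiff A) := by
  rw [Fintype.linearIndependent_iff]
  intro g hg q
  have h := congrArg (cliqueIndicator A q.1 q.2 ⬝ᵥ ·) hg
  simp only [dotProduct_sum, dotProduct_smul, cliqueIndicator_dotProduct_cliqueDiff_eq_ite hA hm,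
    dotProduct_zero, smul_eq_mul, mul_ite, mul_zero, sum_ite_eq', mem_univ, if_true] at h
  simpa [NeZero.ne n] using h

end CliqueDiff

section Eigenspace

variable {m n : ℕ} {A : Fin m × Fin (n ^ 2) → Fin n}

theorem adjMatrix_blockGraph_mulVec_dotProduct_one (hA : IsOrthogonalArray m n A) (hm : 2 ≤ m)
    (v : Fin (n ^ 2) → ℚ) :
    ((blockGraph A).adjMatrix ℚ *ᵥ v) ⬝ᵥ 1 = ((m : ℚ) * n - m) * (v ⬝ᵥ 1) := by
  have hrow : ∀ r : Fin m, ∑ i, cliqueIndicator A r i ⬝ᵥ v = v ⬝ᵥ 1 := fun r => by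
    rw [← sum_dotProduct, sum_cliqueIndicator, dotProduct_comm]
  simp only [adjMatrix_blockGraph_mulVec hA, sub_dotProduct, sum_dotProduct, smul_dotProduct,
    cliqueIndicator_dotProduct_one hA hm, smul_eq_mul, ← sum_mul, hrow, sum_const, card_univ,
    Fintype.card_fin, nsmul_eq_mul]
  ring

variable [NeZero n]

theorem dotProduct_one_eq_zero_of_mulVec_eq (hA : IsOrthogonalArray m n A) (hm : 2 ≤ m)
    {v : Fin (n ^ 2) → ℚ} (hv : (blockGraph A).adjMatrix ℚ *ᵥ v = ((n : ℚ) - m) • v) :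
    v ⬝ᵥ 1 = 0 := by
  have h := adjMatrix_blockGraph_mulVec_dotProduct_one hA hm v
  rw [hv, smul_dotProduct, smul_eq_mul] at h
  have hm1 : (m : ℚ) - 1 ≠ 0 := by
    rw [sub_ne_zero]; exact_mod_cast (by omega : m ≠ 1)
  have : (n : ℚ) * (m - 1) * (v ⬝ᵥ 1) = 0 := by linear_combination -h
  simpa [NeZero.ne n, hm1] using this

theorem sum_smul_cliqueIndicator_mem_span (r : Fin m) (a : Fin n → ℚ) (ha : ∑ i, a i = 0) :
    ∑ i, a i • cliqueIndicator A r i ∈ Submodule.span ℚ (Set.range (cliqueDiff A)) := by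
  have hdiff : ∀ i, cliqueIndicator A r i - cliqueIndicator A r 0 ∈
      Submodule.span ℚ (Set.range (cliqueDiff A)) := fun i => by
    by_cases hi : (i : ℕ) = 0
    · simp [Fin.val_eq_zero_iff.mp hi]
    · rw [← neg_sub]
      exact neg_mem (Submodule.subset_span ⟨(r, ⟨i, hi⟩), rfl⟩)
  have hsum : ∑ i, a i • cliqueIndicator A r i =
      ∑ i, a i • (cliqueIndicator A r i - cliqueIndicator A r 0) := by
    simp only [smul_sub, sum_sub_distrib, ← sum_smul, ha, zero_smul, sub_zero]
  rw [hsum]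
  exact sum_mem fun i _ => Submodule.smul_mem _ _ (hdiff i)

theorem mem_span_cliqueDiff_of_mulVec_eq (hA : IsOrthogonalArray m n A) (hm : 2 ≤ m)
    {v : Fin (n ^ 2) → ℚ} (hv : (blockGraph A).adjMatrix ℚ *ᵥ v = ((n : ℚ) - m) • v) :
    v ∈ Submodule.span ℚ (Set.range (cliqueDiff A)) := by
  have hn : (n : ℚ) ≠ 0 := Nat.cast_ne_zero.mpr (NeZero.ne n)
  have hexpand :
      v = (n : ℚ)⁻¹ • ∑ r, ∑ i, (cliqueIndicator A r i ⬝ᵥ v) • cliqueIndicator A r i := by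
    rw [adjMatrix_blockGraph_mulVec hA, sub_smul, sub_left_inj] at hv
    rw [hv, smul_smul, inv_mul_cancel₀ hn, one_smul]
  have hrow : ∀ r : Fin m, ∑ i, cliqueIndicator A r i ⬝ᵥ v = 0 := fun r => by
    rw [← sum_dotProduct, sum_cliqueIndicator, dotProduct_comm,
      dotProduct_one_eq_zero_of_mulVec_eq hA hm hv]
  rw [hexpand]
  exact Submodule.smul_mem _ _
    (sum_mem fun r _ => sum_smul_cliqueIndicator_mem_span r _ (hrow r))

theorem span_cliqueDiff_eq_eigenspace (hA : IsOrthogonalArray m n A) (hm : 2 ≤ m) :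
    Submodule.span ℚ (Set.range (cliqueDiff A)) =
      Module.End.eigenspace (toLin' ((blockGraph A).adjMatrix ℚ)) ((n : ℚ) - m) := by
  refine le_antisymm (Submodule.span_le.mpr ?_) fun v hv => ?_
  · rintro _ ⟨p, rfl⟩
    rw [SetLike.mem_coe, Module.End.mem_eigenspace_iff, toLin'_apply]
    exact adjMatrix_blockGraph_mulVec_cliqueDiff hA hm p
  · rw [Module.End.mem_eigenspace_iff, toLin'_apply] at hv
    exact mem_span_cliqueDiff_of_mulVec_eq hA hm hv

end Eigenspace

theorem Fin.card_subtype_val_ne_zero (n : ℕ) [NeZero n] :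
    Fintype.card {i : Fin n // (i : ℕ) ≠ 0} = n - 1 := by
  simp [Fintype.card_subtype, Fin.val_eq_zero_iff, filter_ne']

/-- The m(n−1) vectors f_{r,i} = 1_{S_{r,0}} − 1_{S_{r,i}} (r a row, i a nonzero entry)
form a basis of the (n−m)-eigenspace of the adjacency matrix of the block graph:
they are linearly independent, their span is exactly the eigenspace, and the
eigenspace has dimension m(n−1). -/
theorem stmt_13
    (m n : ℕ) (A : Fin m × Fin (n ^ 2) → Fin n) (hA : IsOrthogonalArray m n A)
    (hm : 2 ≤ m) (hmn : m ≤ n)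
    (M : Matrix (Fin (n ^ 2)) (Fin (n ^ 2)) ℚ)
    (hM : ∀ col col', M col col' = if (blockGraph A).Adj col col' then 1 else 0)
    (f : Fin m × {i : Fin n // (i : ℕ) ≠ 0} → Fin (n ^ 2) → ℚ)
    (hf : f = fun p col =>
      (if (A (p.1, col) : ℕ) = 0 then (1 : ℚ) else 0) -
        (if A (p.1, col) = p.2.1 then (1 : ℚ) else 0)) :
    LinearIndependent ℚ f ∧
    (∀ v : Fin (n ^ 2) → ℚ,
      v ∈ Submodule.span ℚ (Set.range f) ↔ M.mulVec v = ((n : ℚ) - (m : ℚ)) • v) ∧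
    Module.finrank ℚ (Submodule.span ℚ (Set.range f)) = m * (n - 1) := by
  have : NeZero n := ⟨by omega⟩
  obtain rfl : M = (blockGraph A).adjMatrix ℚ := Matrix.ext hM
  obtain rfl : f = cliqueDiff A := by
    subst hf
    ext p c
    simp [cliqueDiff, cliqueIndicator, Fin.val_eq_zero_iff]
  have hind := linearIndependent_cliqueDiff hA hm
  refine ⟨hind, fun v => ?_, ?_⟩
  · rw [span_cliqueDiff_eq_eigenspace hA hm, Module.End.mem_eigenspace_iff, toLin'_apply]
  · rw [finrank_span_eq_card hind, Fintype.card_prod, Fintype.card_fin,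
      Fin.card_subtype_val_ne_zero]
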